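/- arXiv:1503.04954 — 4 statements merged into one kernel-verified Lean document; each statement's English description precedes it below -/
import Mathlib

section
/- Let T > 0, let a ∈ L¹([0,T]) be not almost everywhere zero, and let g : [0,∞) → [0,∞) be continuous with g(0) = 0 and g(s) > 0 for all s > 0, continuously differentiable on (0,∞) with g'(s) > 0 for all s > 0. If the equation u'' + a(x) g(u) = 0 on [0,T] has a positive solution satisfying either the Neumann boundary conditions or the periodic boundary conditions, then ∫₀ᵀ a(x) dx < 0. -/
open MeasureTheory Set Filter

/-- `u` (with derivative `u'`) is a C¹ solution of `u'' + f(x) = 0` on `[0,T]`: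
`u'` is absolutely continuous and the equation holds a.e., expressed via the
integral equation `u'(x) = u'(0) − ∫₀ˣ f(t) dt`. -/
def IsSolOn (T : ℝ) (f : ℝ → ℝ) (u u' : ℝ → ℝ) : Prop :=
  (∀ x ∈ Icc (0:ℝ) T, HasDerivWithinAt u (u' x) (Icc (0:ℝ) T) x) ∧
  ContinuousOn u' (Icc (0:ℝ) T) ∧
  ∀ x ∈ Icc (0:ℝ) T, u' x = u' 0 - ∫ t in (0:ℝ)..x, f t

/-- The equation `u'' + a(x) g(u) = 0` on `[0,T]` has a positive solution
satisfying the Neumann boundary conditions. -/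
def PosSolNeumann (T : ℝ) (a g : ℝ → ℝ) : Prop :=
  ∃ u u' : ℝ → ℝ, IsSolOn T (fun t => a t * g (u t)) u u' ∧
    (∀ x ∈ Icc (0:ℝ) T, 0 < u x) ∧ u' 0 = 0 ∧ u' T = 0

/-- The equation `u'' + a(x) g(u) = 0` on `[0,T]` has a positive solution
satisfying the periodic boundary conditions. -/
def PosSolPeriodic (T : ℝ) (a g : ℝ → ℝ) : Prop :=
  ∃ u u' : ℝ → ℝ, IsSolOn T (fun t => a t * g (u t)) u u' ∧
    (∀ x ∈ Icc (0:ℝ) T, 0 < u x) ∧ u 0 = u T ∧ u' 0 = u' T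

/-- Condition (g1): `g : [0,∞) → [0,∞)` is continuous, `g 0 = 0`, `g > 0` on `(0,∞)`. -/
def CondG1 (g : ℝ → ℝ) : Prop :=
  ContinuousOn g (Ici (0:ℝ)) ∧ (∀ s : ℝ, 0 ≤ s → 0 ≤ g s) ∧ g 0 = 0 ∧
    ∀ s : ℝ, 0 < s → 0 < g s

/-- `g` is regularly oscillating at zero. -/
def RegOscAtZero (g : ℝ → ℝ) : Prop :=
  ∀ ε : ℝ, 0 < ε → ∃ δ > (0:ℝ), ∃ η > (0:ℝ), ∀ s ω : ℝ,
    0 < s → s < δ → |ω - 1| < η → |g (ω * s) / g s - 1| < ε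

/-- `liminf_{s → +∞} g(s)/s`, computed in `EReal`. -/
noncomputable def GrowthLiminf (g : ℝ → ℝ) : EReal :=
  liminf (fun s : ℝ => ((g s / s : ℝ) : EReal)) atTop

/-- `limsup_{s → +∞} g(s)/s`, computed in `EReal`. -/
noncomputable def GrowthLimsup (g : ℝ → ℝ) : EReal :=
  limsup (fun s : ℝ => ((g s / s : ℝ) : EReal)) atTop

/-! Dividing the equation by `g u > 0` and integrating by parts (`u'` is absolutely
continuous, `1 / g u` is `C¹`) gives
`∫₀ᵀ a = [u' / g u]₀ᵀ - ∫₀ᵀ g'(u) u'² / (g u)²`,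
and both boundary conditions kill the boundary term. The remaining integral is nonnegative
and vanishes only if `u' ≡ 0`; then `∫₀ˣ a g(u) = 0` for every `x`, so `a g(u)`, hence `a`,
vanishes a.e. -/

theorem absolutelyContinuousOnInterval_of_hasDerivWithinAt {w w' : ℝ → ℝ} {a b : ℝ}
    (hab : a ≤ b) (hw : ∀ x ∈ Icc a b, HasDerivWithinAt w (w' x) (Icc a b) x)
    (hw' : ContinuousOn w' (Icc a b)) :
    AbsolutelyContinuousOnInterval w a b := by
  obtain ⟨C, hC⟩ := isCompact_Icc.exists_bound_of_continuousOn hw'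
  rw [← uIcc_of_le hab] at hw hC
  refine (convex_uIcc a b |>.lipschitzOnWith_of_nnnorm_hasDerivWithin_le hw
    (C := C.toNNReal) fun x hx => ?_).absolutelyContinuousOnInterval
  rw [← NNReal.coe_le_coe, coe_nnnorm, Real.coe_toNNReal']
  exact (hC x hx).trans (le_max_left _ _)

theorem integral_mul_eq_of_eq_sub_integral {f w w' V : ℝ → ℝ} {a b : ℝ} (hab : a ≤ b)
    (hf : IntervalIntegrable f volume a b)
    (hV : ∀ x ∈ Icc a b, V x = V a - ∫ t in a..x, f t)
    (hw : ∀ x ∈ Icc a b, HasDerivWithinAt w (w' x) (Icc a b) x)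
    (hw' : ContinuousOn w' (Icc a b)) :
    ∫ x in a..b, f x * w x = V a * w a - V b * w b + ∫ x in a..b, V x * w' x := by
  set G : ℝ → ℝ := fun x => V a - ∫ t in a..x, f t
  have hG : AbsolutelyContinuousOnInterval G a b :=
    (LipschitzWith.const (V a)).lipschitzOnWith.absolutelyContinuousOnInterval.sub
      (hf.absolutelyContinuousOnInterval_intervalIntegral left_mem_uIcc)
  have hparts := hG.integral_mul_deriv_eq_deriv_mul
    (absolutelyContinuousOnInterval_of_hasDerivWithinAt hab hw hw')
  have hderiv_w : ∫ x in a..b, G x * deriv w x = ∫ x in a..b, V x * w' x := by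
    refine intervalIntegral.integral_congr_ae ?_
    filter_upwards [Measure.ae_ne volume b] with x hxb hx
    rw [uIoc_of_le hab] at hx
    have hxI : x ∈ Icc a b := Ioc_subset_Icc_self hx
    rw [hV x hxI, ((hw x hxI).hasDerivAt
      (Icc_mem_nhds hx.1 (lt_of_le_of_ne hx.2 hxb))).deriv]
  have hderiv_G : ∫ x in a..b, deriv G x * w x = -∫ x in a..b, f x * w x := by
    rw [← intervalIntegral.integral_neg]
    refine intervalIntegral.integral_congr_ae ?_
    filter_upwards [hf.ae_hasDerivAt_integral] with x hx hxI
    rw [((hx (uIoc_subset_uIcc hxI) a left_mem_uIcc).const_sub (V a)).deriv, neg_mul]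
  have hGa : G a = V a := by simp [G]
  have hGb : G b = V b := (hV b (right_mem_Icc.2 hab)).symm
  rw [hderiv_w, hderiv_G, hGa, hGb] at hparts
  linarith

theorem ae_eq_zero_of_forall_intervalIntegral_eq_zero {E : Type*} [NormedAddCommGroup E]
    [NormedSpace ℝ E] [CompleteSpace E] {f : ℝ → E} {a b : ℝ}
    (hf : IntervalIntegrable f volume a b) (h : ∀ x ∈ Icc a b, ∫ t in a..x, f t = 0) :
    ∀ᵐ x ∂volume.restrict (Icc a b), f x = 0 := by
  rw [← Measure.restrict_congr_set Ioo_ae_eq_Icc, ae_restrict_iff' measurableSet_Ioo]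
  filter_upwards [hf.ae_hasDerivAt_integral] with x hx hxI
  have hzero : (fun y => ∫ t in a..y, f t) =ᶠ[nhds x] fun _ => 0 :=
    eventually_of_mem (Ioo_mem_nhds hxI.1 hxI.2) fun y hy => h y (Ioo_subset_Icc_self hy)
  exact (hx (Icc_subset_uIcc (Ioo_subset_Icc_self hxI)) a left_mem_uIcc).unique
    ((hasDerivAt_const x 0).congr_of_eventuallyEq hzero)

theorem IsSolOn.continuousOn {T : ℝ} {f u u' : ℝ → ℝ} (hsol : IsSolOn T f u u') :
    ContinuousOn u (Icc 0 T) :=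
  fun x hx => (hsol.1 x hx).continuousWithinAt

theorem IsSolOn.integral_eq_sub_integral {T : ℝ} {a g g' u u' : ℝ → ℝ} (hT : 0 ≤ T)
    (ha : IntervalIntegrable a volume 0 T) (hg : ContinuousOn g (Ici 0))
    (hgpos : ∀ s, 0 < s → 0 < g s) (hgd : ∀ s, 0 < s → HasDerivAt g (g' s) s)
    (hgdc : ContinuousOn g' (Ioi 0)) (hsol : IsSolOn T (fun t => a t * g (u t)) u u')
    (hu : ∀ x ∈ Icc 0 T, 0 < u x) :
    ∫ x in 0..T, a x =
      u' 0 / g (u 0) - u' T / g (u T) - ∫ x in 0..T, g' (u x) * u' x ^ 2 / g (u x) ^ 2 := by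
  have hu_cont := hsol.continuousOn
  obtain ⟨hu_deriv, hu'_cont, hu'_eq⟩ := hsol
  have hgu_cont : ContinuousOn (fun x => g (u x)) (Icc 0 T) :=
    hg.comp hu_cont fun x hx => (hu x hx).le
  have hgu_ne : ∀ x ∈ Icc 0 T, g (u x) ≠ 0 := fun x hx => (hgpos _ (hu x hx)).ne'
  have hw : ∀ x ∈ Icc 0 T, HasDerivWithinAt (fun x => (g (u x))⁻¹)
      (-(g' (u x) * u' x / g (u x) ^ 2)) (Icc 0 T) x := by
    intro x hx
    simpa [neg_div] using
      ((hgd _ (hu x hx)).comp_hasDerivWithinAt x (hu_deriv x hx)).fun_inv (hgu_ne x hx)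
  have hw' : ContinuousOn (fun x => -(g' (u x) * u' x / g (u x) ^ 2)) (Icc 0 T) :=
    (((hgdc.comp hu_cont fun x hx => hu x hx).mul hu'_cont).div (hgu_cont.pow 2)
      fun x hx => pow_ne_zero 2 (hgu_ne x hx)).neg
  have hparts := integral_mul_eq_of_eq_sub_integral hT
    (ha.mul_continuousOn (by rwa [uIcc_of_le hT])) hu'_eq hw hw'
  have ha_eq : ∫ x in 0..T, a x = ∫ x in 0..T, a x * g (u x) * (g (u x))⁻¹ := by
    refine intervalIntegral.integral_congr fun x hx => ?_
    rw [uIcc_of_le hT] at hx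
    simp [hgu_ne x hx]
  have hq_eq : ∫ x in 0..T, u' x * -(g' (u x) * u' x / g (u x) ^ 2) =
      -∫ x in 0..T, g' (u x) * u' x ^ 2 / g (u x) ^ 2 := by
    rw [← intervalIntegral.integral_neg]
    congr 1 with x
    ring
  rw [ha_eq, hparts, hq_eq]
  ring

theorem IsSolOn.ae_eq_zero_of_deriv_eq_zero {T : ℝ} {a g u u' : ℝ → ℝ} (hT : 0 ≤ T)
    (ha : IntervalIntegrable a volume 0 T) (hg : ContinuousOn g (Ici 0))
    (hgpos : ∀ s, 0 < s → 0 < g s) (hsol : IsSolOn T (fun t => a t * g (u t)) u u')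
    (hu : ∀ x ∈ Icc 0 T, 0 < u x) (hu' : ∀ x ∈ Icc 0 T, u' x = 0) :
    ∀ᵐ x ∂volume.restrict (Icc 0 T), a x = 0 := by
  have hgu_cont : ContinuousOn (fun x => g (u x)) (Icc 0 T) :=
    hg.comp hsol.continuousOn fun x hx => (hu x hx).le
  have hprimitive : ∀ x ∈ Icc 0 T, ∫ t in 0..x, a t * g (u t) = 0 := fun x hx => by
    have := hsol.2.2 x hx
    rw [hu' x hx, hu' 0 (left_mem_Icc.2 hT)] at this
    linarith
  filter_upwards [ae_eq_zero_of_forall_intervalIntegral_eq_zero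
      (ha.mul_continuousOn (by rwa [uIcc_of_le hT])) hprimitive,
    ae_restrict_mem measurableSet_Icc] with x hx hxI
  exact (mul_eq_zero.1 hx).resolve_right (hgpos _ (hu x hxI)).ne'

theorem integral_neg_of_isSolOn {T : ℝ} (hT : 0 < T) {a g g' u u' : ℝ → ℝ}
    (ha : IntervalIntegrable a volume 0 T)
    (ha0 : ¬ ∀ᵐ x ∂volume.restrict (Icc 0 T), a x = 0) (hg : ContinuousOn g (Ici 0))
    (hgpos : ∀ s, 0 < s → 0 < g s) (hgd : ∀ s, 0 < s → HasDerivAt g (g' s) s)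
    (hgdc : ContinuousOn g' (Ioi 0)) (hgdpos : ∀ s, 0 < s → 0 < g' s)
    (hsol : IsSolOn T (fun t => a t * g (u t)) u u') (hu : ∀ x ∈ Icc 0 T, 0 < u x)
    (hbc : u' 0 / g (u 0) = u' T / g (u T)) :
    ∫ x in 0..T, a x < 0 := by
  rw [hsol.integral_eq_sub_integral hT.le ha hg hgpos hgd hgdc hu, hbc, sub_self, zero_sub,
    neg_neg_iff_pos]
  by_contra hq
  refine ha0 (hsol.ae_eq_zero_of_deriv_eq_zero hT.le ha hg hgpos hu fun x hx => ?_)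
  by_contra hx0
  have hu_cont := hsol.continuousOn
  have hq_cont : ContinuousOn (fun x => g' (u x) * u' x ^ 2 / g (u x) ^ 2) (Icc 0 T) :=
    ((hgdc.comp hu_cont fun y hy => hu y hy).mul (hsol.2.1.pow 2)).div
      ((hg.comp hu_cont fun y hy => (hu y hy).le).pow 2)
      fun y hy => pow_ne_zero 2 (hgpos _ (hu y hy)).ne'
  refine hq (intervalIntegral.integral_pos hT hq_cont (fun y hy => ?_) ⟨x, hx, ?_⟩)
  · have hyI := Ioc_subset_Icc_self hy
    exact div_nonneg (mul_nonneg (hgdpos _ (hu y hyI)).le (sq_nonneg _)) (sq_nonneg _)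
  · exact div_pos (mul_pos (hgdpos _ (hu x hx)) (sq_pos_of_ne_zero hx0))
      (pow_pos (hgpos _ (hu x hx)) 2)

/-- If `a ∈ L¹([0,T])` is not a.e. zero and `g` satisfies (g1) and is `C¹` on `(0,∞)`
with `g' > 0` there, then the existence of a positive solution of
`u'' + a(x) g(u) = 0` with Neumann or periodic boundary conditions forces
`∫₀ᵀ a < 0`. -/
theorem statement_0
    (T : ℝ) (hT : 0 < T)
    (a : ℝ → ℝ) (ha : IntervalIntegrable a volume 0 T)
    (ha0 : ¬ (∀ᵐ x ∂(volume.restrict (Icc (0:ℝ) T)), a x = 0))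
    (g g' : ℝ → ℝ) (hg1 : CondG1 g)
    (hgd : ∀ s : ℝ, 0 < s → HasDerivAt g (g' s) s)
    (hgdc : ContinuousOn g' (Ioi (0:ℝ)))
    (hgdpos : ∀ s : ℝ, 0 < s → 0 < g' s)
    (hsol : PosSolNeumann T a g ∨ PosSolPeriodic T a g) :
    (∫ x in (0:ℝ)..T, a x) < 0 := by
  obtain ⟨hg, -, -, hgpos⟩ := hg1
  rcases hsol with ⟨u, u', hs, hu, h0, hT'⟩ | ⟨u, u', hs, hu, hu0T, hu'0T⟩
  · exact integral_neg_of_isSolOn hT ha ha0 hg hgpos hgd hgdc hgdpos hs hu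
      (by rw [h0, hT', zero_div, zero_div])
  · exact integral_neg_of_isSolOn hT ha ha0 hg hgpos hgd hgdc hgdpos hs hu (by rw [hu0T, hu'0T])
end

section
/- Let T > 0, let g : (0,∞) → (0,∞) be continuously differentiable with bounded derivative on (0,∞) (i.e., there exists D > 0 with |g'(s)| ≤ D for all s > 0), and let a ∈ L¹([0,T]) with ∫₀ᵀ a(x) dx < 0. Then there exists ν_* > 0 such that for every ν with 0 < ν < ν_*, the equation u'' + ν a(x) g(u) = 0 has no positive solution satisfying the Neumann boundary conditions and no positive solution satisfying the periodic boundary conditions. -/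
open MeasureTheory Set Filter

/-- For a nonnegative integrand, an integral over a subinterval (oriented, left endpoint
≤ right endpoint) is at most the integral over the whole interval. -/
lemma aux_sub_le {f : ℝ → ℝ} {lo hi c d : ℝ} (hc : c ∈ Icc lo hi) (hd : d ∈ Icc lo hi)
    (hcd : c ≤ d) (hfi : IntervalIntegrable f volume lo hi)
    (hnn : ∀ t ∈ Icc lo hi, 0 ≤ f t) :
    |∫ t in c..d, f t| ≤ ∫ t in lo..hi, f t := by
  have h1 : 0 ≤ ∫ t in c..d, f t :=
    intervalIntegral.integral_nonneg hcd (fun x hx => hnn x ⟨hc.1.trans hx.1, hx.2.trans hd.2⟩)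
  rw [abs_of_nonneg h1]
  refine intervalIntegral.integral_mono_interval hc.1 hcd hd.2 ?_ hfi
  exact MeasureTheory.ae_restrict_of_forall_mem measurableSet_Ioc
    (fun x hx => hnn x (Ioc_subset_Icc_self hx))

/-- For a nonnegative integrand, any interval integral between points of `[lo,hi]` is bounded
in absolute value by the integral over `[lo,hi]`. -/
lemma aux_abs_le {f : ℝ → ℝ} {lo hi c d : ℝ} (hc : c ∈ Icc lo hi) (hd : d ∈ Icc lo hi)
    (hfi : IntervalIntegrable f volume lo hi) (hnn : ∀ t ∈ Icc lo hi, 0 ≤ f t) :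
    |∫ t in c..d, f t| ≤ ∫ t in lo..hi, f t := by
  rcases le_total c d with h | h
  · exact aux_sub_le hc hd h hfi hnn
  · rw [intervalIntegral.integral_symm, abs_neg]
    exact aux_sub_le hd hc h hfi hnn

/-- A continuous function on `[lo,hi]` with zero integral has a zero. -/
lemma aux_exists_zero {lo hi : ℝ} (h : lo < hi) {f : ℝ → ℝ}
    (hf : ContinuousOn f (Icc lo hi)) (h0 : (∫ t in lo..hi, f t) = 0) :
    ∃ ξ ∈ Icc lo hi, f ξ = 0 := by
  by_contra hcon
  push_neg at hcon
  have hfi : IntervalIntegrable f volume lo hi := by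
    apply ContinuousOn.intervalIntegrable
    rwa [uIcc_of_le h.le]
  have hlo : lo ∈ Icc lo hi := ⟨le_rfl, h.le⟩
  have hsign : ∀ x ∈ Icc lo hi, 0 < f x ↔ 0 < f lo := by
    intro x hx
    constructor
    · intro hpos
      rcases (hcon lo hlo).lt_or_gt with hneg | hpos' 
      · -- f lo < 0 < f x : IVT gives a zero
        exfalso
        have hsub : uIcc lo x ⊆ Icc lo hi := by
          rw [uIcc_of_le hx.1]; exact Icc_subset_Icc le_rfl hx.2
        have := intermediate_value_uIcc (hf.mono hsub)
        have h0mem : (0:ℝ) ∈ uIcc (f lo) (f x) := by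
          rw [Set.mem_uIcc]; left; exact ⟨hneg.le, hpos.le⟩
        obtain ⟨c, hcmem, hc0⟩ := this h0mem
        exact hcon c (hsub hcmem) hc0
      · exact hpos'
    · intro hpos'
      by_contra hle
      push_neg at hle
      have hneg : f x < 0 := lt_of_le_of_ne hle (hcon x hx)
      have hsub : uIcc lo x ⊆ Icc lo hi := by
        rw [uIcc_of_le hx.1]; exact Icc_subset_Icc le_rfl hx.2
      have := intermediate_value_uIcc (hf.mono hsub)
      have h0mem : (0:ℝ) ∈ uIcc (f lo) (f x) := by
        rw [Set.mem_uIcc]; right; exact ⟨hneg.le, hpos'.le⟩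
      obtain ⟨c, hcmem, hc0⟩ := this h0mem
      exact hcon c (hsub hcmem) hc0
  rcases (hcon lo hlo).lt_or_gt with hneg | hpos
  · -- f < 0 everywhere, integral < 0
    have hall : ∀ x ∈ Icc lo hi, f x < 0 := by
      intro x hx
      rcases (hcon x hx).lt_or_gt with h' | h'
      · exact h'
      · exact absurd ((hsign x hx).1 h') (not_lt.2 hneg.le)
    have : 0 < ∫ t in lo..hi, -f t :=
      intervalIntegral.intervalIntegral_pos_of_pos_on hfi.neg
        (fun x hx => neg_pos.2 (hall x (Ioo_subset_Icc_self hx))) h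
    rw [intervalIntegral.integral_neg, h0] at this
    simp at this
  · have hall : ∀ x ∈ Ioo lo hi, 0 < f x := fun x hx =>
      (hsign x (Ioo_subset_Icc_self hx)).2 hpos
    have : 0 < ∫ t in lo..hi, f t :=
      intervalIntegral.intervalIntegral_pos_of_pos_on hfi hall h
    rw [h0] at this
    exact lt_irrefl _ this

/-- Key estimate: a positive solution with a zero of `u'` and equal derivative boundary values
forces `-∫ a ≤ 2 ν D T (∫|a|)²`, provided `ν D T ∫|a| ≤ 1/2`. -/
lemma aux_key (T : ℝ) (hT : 0 < T)
    (g g' : ℝ → ℝ)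
    (hgpos : ∀ s : ℝ, 0 < s → 0 < g s)
    (hgd : ∀ s : ℝ, 0 < s → HasDerivAt g (g' s) s)
    (D : ℝ) (hD : 0 < D) (hbd : ∀ s : ℝ, 0 < s → |g' s| ≤ D)
    (a : ℝ → ℝ) (ha : IntervalIntegrable a volume 0 T)
    (ν : ℝ) (hν : 0 < ν)
    (u u' : ℝ → ℝ)
    (hsol : IsSolOn T (fun t => (ν * a t) * g (u t)) u u')
    (hupos : ∀ x ∈ Icc (0:ℝ) T, 0 < u x)
    (ξ : ℝ) (hξ : ξ ∈ Icc (0:ℝ) T) (hξ0 : u' ξ = 0)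
    (hbc : u' T = u' 0)
    (hsmall : ν * (D * T * (∫ t in (0:ℝ)..T, |a t|)) ≤ 1/2) :
    -(∫ x in (0:ℝ)..T, a x) ≤ 2 * ν * D * T * (∫ t in (0:ℝ)..T, |a t|)^2 := by
  obtain ⟨hderiv, hcont, hinteq⟩ := hsol
  set A := ∫ t in (0:ℝ)..T, |a t| with hAdef
  have hTle : (0:ℝ) ≤ T := hT.le
  have hA0 : 0 ≤ A := intervalIntegral.integral_nonneg hTle (fun x _ => abs_nonneg _)
  have hucont : ContinuousOn u (Icc 0 T) := fun x hx => (hderiv x hx).continuousWithinAt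
  have hgucont : ContinuousOn (fun t => g (u t)) (Icc 0 T) := by
    refine ContinuousOn.comp (f := u) (g := g) (s := Icc (0:ℝ) T) (t := Ioi (0:ℝ)) ?_ hucont ?_
    · exact fun s hs => ((hgd s hs).continuousAt).continuousWithinAt
    · exact fun x hx => hupos x hx
  -- maximum of g ∘ u
  obtain ⟨xM, hxM, hM'⟩ := isCompact_Icc.exists_isMaxOn (nonempty_Icc.2 hTle) hgucont
  have hM : ∀ y ∈ Icc (0:ℝ) T, g (u y) ≤ g (u xM) := fun y hy => hM' hy
  set M := g (u xM) with hMdef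
  have hMpos : 0 < M := hgpos _ (hupos _ hxM)
  -- integrability
  have h_int : IntervalIntegrable (fun t => a t * g (u t)) volume 0 T := by
    apply ha.mul_continuousOn
    rwa [uIcc_of_le hTle]
  have haA : IntervalIntegrable (fun t => |a t|) volume 0 T := ha.abs
  -- the integral equation in the convenient form
  have hieq : ∀ x ∈ Icc (0:ℝ) T, u' x = u' 0 - ν * ∫ t in (0:ℝ)..x, a t * g (u t) := by
    intro x hx
    rw [hinteq x hx]
    congr 1
    rw [← intervalIntegral.integral_const_mul]
    congr 1; ext t; ring
  -- Lipschitz bound for g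
  have hLip : ∀ s t : ℝ, 0 < s → 0 < t → |g s - g t| ≤ D * |s - t| := by
    intro s t hs ht
    have := Convex.norm_image_sub_le_of_norm_hasDerivWithin_le
      (f := g) (f' := g') (s := Ioi (0:ℝ)) (C := D)
      (fun x hx => (hgd x hx).hasDerivWithinAt)
      (fun x hx => by rw [Real.norm_eq_abs]; exact hbd x hx)
      (convex_Ioi 0) ht hs
    simpa [Real.norm_eq_abs] using this
  -- bound on u'
  have hu'bd : ∀ x ∈ Icc (0:ℝ) T, |u' x| ≤ ν * (A * M) := by
    intro x hx
    have e0 : u' 0 = ν * ∫ t in (0:ℝ)..ξ, a t * g (u t) := by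
      have := hieq ξ hξ
      rw [hξ0] at this
      linarith
    have e1 : u' x = ν * ((∫ t in (0:ℝ)..ξ, a t * g (u t)) - ∫ t in (0:ℝ)..x, a t * g (u t)) := by
      rw [hieq x hx, e0]; ring
    have e2 : ((∫ t in (0:ℝ)..ξ, a t * g (u t)) - ∫ t in (0:ℝ)..x, a t * g (u t))
        = ∫ t in x..ξ, a t * g (u t) := by
      apply intervalIntegral.integral_interval_sub_left
      · exact h_int.mono_set (by rw [uIcc_of_le hTle, uIcc_of_le hξ.1]; exact Icc_subset_Icc le_rfl hξ.2)
      · exact h_int.mono_set (by rw [uIcc_of_le hTle, uIcc_of_le hx.1]; exact Icc_subset_Icc le_rfl hx.2)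
    rw [e1, e2, abs_mul, abs_of_pos hν]
    refine mul_le_mul_of_nonneg_left ?_ hν.le
    calc |∫ t in x..ξ, a t * g (u t)|
        ≤ |(∫ t in x..ξ, |a t * g (u t)|)| := by
          simpa only [Real.norm_eq_abs] using
            intervalIntegral.norm_integral_le_abs_integral_norm
              (f := fun t => a t * g (u t)) (a := x) (b := ξ) (μ := volume)
      _ ≤ ∫ t in (0:ℝ)..T, |a t * g (u t)| :=
          aux_abs_le hx hξ h_int.abs (fun t _ => abs_nonneg _)
      _ ≤ ∫ t in (0:ℝ)..T, |a t| * M := by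
          apply intervalIntegral.integral_mono_on hTle h_int.abs (haA.mul_const M)
          intro t ht
          rw [abs_mul, abs_of_pos (hgpos _ (hupos t ht))]
          exact mul_le_mul_of_nonneg_left (hM t ht) (abs_nonneg _)
      _ = A * M := by rw [intervalIntegral.integral_mul_const]
  -- oscillation bound on u
  have hosc : ∀ x ∈ Icc (0:ℝ) T, |u x - u 0| ≤ ν * (A * M) * T := by
    intro x hx
    have h0mem : (0:ℝ) ∈ Icc (0:ℝ) T := ⟨le_rfl, hTle⟩
    have := Convex.norm_image_sub_le_of_norm_hasDerivWithin_le
      (f := u) (f' := u') (s := Icc (0:ℝ) T) (C := ν * (A * M))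
      hderiv (fun y hy => by rw [Real.norm_eq_abs]; exact hu'bd y hy)
      (convex_Icc 0 T) h0mem hx
    rw [Real.norm_eq_abs, Real.norm_eq_abs, sub_zero, abs_of_nonneg hx.1] at this
    calc |u x - u 0| ≤ ν * (A * M) * x := this
      _ ≤ ν * (A * M) * T := by
          apply mul_le_mul_of_nonneg_left hx.2
          positivity
  -- M ≤ 2 g(u 0)
  have h0mem : (0:ℝ) ∈ Icc (0:ℝ) T := ⟨le_rfl, hTle⟩
  have hgu0 : 0 < g (u 0) := hgpos _ (hupos _ h0mem)
  have hMle : M ≤ 2 * g (u 0) := by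
    have h1 : |g (u xM) - g (u 0)| ≤ D * |u xM - u 0| :=
      hLip _ _ (hupos _ hxM) (hupos _ h0mem)
    have h2 : |u xM - u 0| ≤ ν * (A * M) * T := hosc xM hxM
    have h3 : M - g (u 0) ≤ D * (ν * (A * M) * T) := by
      calc M - g (u 0) ≤ |g (u xM) - g (u 0)| := le_abs_self _
        _ ≤ D * |u xM - u 0| := h1
        _ ≤ D * (ν * (A * M) * T) := mul_le_mul_of_nonneg_left h2 hD.le
    have h4 : D * (ν * (A * M) * T) = (ν * (D * T * A)) * M := by ring
    have h5 : (ν * (D * T * A)) * M ≤ (1/2) * M :=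
      mul_le_mul_of_nonneg_right hsmall hMpos.le
    nlinarith
  -- ∫ a g(u) = 0
  have hTmem : T ∈ Icc (0:ℝ) T := ⟨hTle, le_rfl⟩
  have hzero : (∫ t in (0:ℝ)..T, a t * g (u t)) = 0 := by
    have := hieq T hTmem
    rw [hbc] at this
    have h6 : ν * ∫ t in (0:ℝ)..T, a t * g (u t) = 0 := by linarith
    exact (mul_eq_zero.1 h6).resolve_left (ne_of_gt hν)
  -- decomposition
  have h_int2 : IntervalIntegrable (fun t => a t * (g (u t) - g (u 0))) volume 0 T := by
    apply ha.mul_continuousOn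
    rw [uIcc_of_le hTle]
    exact hgucont.sub continuousOn_const
  have hdecomp : (∫ t in (0:ℝ)..T, a t * (g (u t) - g (u 0)))
      = - (∫ x in (0:ℝ)..T, a x) * g (u 0) := by
    have : (fun t => a t * (g (u t) - g (u 0)))
        = fun t => a t * g (u t) - a t * g (u 0) := by ext t; ring
    rw [this, intervalIntegral.integral_sub h_int (ha.mul_const _), hzero,
      intervalIntegral.integral_mul_const]
    ring
  -- final bound
  have hC : ∀ t ∈ Icc (0:ℝ) T, |a t * (g (u t) - g (u 0))| ≤ |a t| * (D * (ν * (A * M) * T)) := by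
    intro t ht
    rw [abs_mul]
    apply mul_le_mul_of_nonneg_left _ (abs_nonneg _)
    calc |g (u t) - g (u 0)| ≤ D * |u t - u 0| := hLip _ _ (hupos t ht) (hupos _ h0mem)
      _ ≤ D * (ν * (A * M) * T) := mul_le_mul_of_nonneg_left (hosc t ht) hD.le
  have hfin : -(∫ x in (0:ℝ)..T, a x) * g (u 0) ≤ A * (D * (ν * (A * M) * T)) := by
    rw [← hdecomp]
    calc (∫ t in (0:ℝ)..T, a t * (g (u t) - g (u 0)))
        ≤ |∫ t in (0:ℝ)..T, a t * (g (u t) - g (u 0))| := le_abs_self _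
      _ ≤ ∫ t in (0:ℝ)..T, |a t * (g (u t) - g (u 0))| :=
          intervalIntegral.abs_integral_le_integral_abs hTle
      _ ≤ ∫ t in (0:ℝ)..T, |a t| * (D * (ν * (A * M) * T)) :=
          intervalIntegral.integral_mono_on hTle h_int2.abs (haA.mul_const _) hC
      _ = A * (D * (ν * (A * M) * T)) := by rw [intervalIntegral.integral_mul_const]
  have hfin2 : -(∫ x in (0:ℝ)..T, a x) * g (u 0)
      ≤ (2 * ν * D * T * A^2) * g (u 0) := by
    calc -(∫ x in (0:ℝ)..T, a x) * g (u 0) ≤ A * (D * (ν * (A * M) * T)) := hfin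
      _ ≤ A * (D * (ν * (A * (2 * g (u 0))) * T)) := by
          apply mul_le_mul_of_nonneg_left _ hA0
          apply mul_le_mul_of_nonneg_left _ hD.le
          apply mul_le_mul_of_nonneg_right _ hTle
          apply mul_le_mul_of_nonneg_left _ hν.le
          exact mul_le_mul_of_nonneg_left hMle hA0
      _ = (2 * ν * D * T * A^2) * g (u 0) := by ring
  exact le_of_mul_le_mul_right (by linarith [hfin2]) hgu0

/-- Proposition (nonexistence): if `g : (0,∞) → (0,∞)` is continuously
differentiable with `|g'| ≤ D` on `(0,∞)` and `∫₀ᵀ a < 0`, then there is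
`ν_* > 0` such that for every `0 < ν < ν_*` the equation `u'' + ν a(x) g(u) = 0`
has no positive Neumann solution and no positive periodic solution. -/
theorem statement_10
    (T : ℝ) (hT : 0 < T)
    (g g' : ℝ → ℝ)
    (hgpos : ∀ s : ℝ, 0 < s → 0 < g s)
    (hgd : ∀ s : ℝ, 0 < s → HasDerivAt g (g' s) s)
    (hgdc : ContinuousOn g' (Ioi (0:ℝ)))
    (D : ℝ) (hD : 0 < D) (hbd : ∀ s : ℝ, 0 < s → |g' s| ≤ D)
    (a : ℝ → ℝ) (ha : IntervalIntegrable a volume 0 T)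
    (ha2 : (∫ x in (0:ℝ)..T, a x) < 0) :
    ∃ νs : ℝ, 0 < νs ∧ ∀ ν : ℝ, 0 < ν → ν < νs →
      ¬ PosSolNeumann T (fun t => ν * a t) g ∧
      ¬ PosSolPeriodic T (fun t => ν * a t) g := by
  set A := ∫ t in (0:ℝ)..T, |a t| with hAdef
  set ia := ∫ x in (0:ℝ)..T, a x with hiadef
  have hTle : (0:ℝ) ≤ T := hT.le
  have hApos : 0 < A := by
    have h1 : |ia| ≤ A := by
      simpa [Real.norm_eq_abs] using
        intervalIntegral.norm_integral_le_integral_norm (f := a) (a := (0:ℝ)) (b := T)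
          (μ := volume) hTle
    have h2 : 0 < |ia| := abs_pos.2 (ne_of_lt ha2)
    linarith
  refine ⟨min ((1/2) / (D * T * A)) ((-ia) / (2 * D * T * A^2)), ?_, ?_⟩
  · apply lt_min
    · positivity
    · apply div_pos (by linarith) (by positivity)
  intro ν hν hνlt
  have hsmall : ν * (D * T * A) ≤ 1/2 := by
    have := lt_of_lt_of_le hνlt (min_le_left _ _)
    rw [div_eq_mul_inv] at this
    have hpos : 0 < D * T * A := by positivity
    calc ν * (D * T * A) ≤ ((1/2) * (D * T * A)⁻¹) * (D * T * A) :=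
          mul_le_mul_of_nonneg_right this.le hpos.le
      _ = 1/2 := by field_simp
  have hνbound : 2 * ν * D * T * A^2 < -ia := by
    have h1 := lt_of_lt_of_le hνlt (min_le_right _ _)
    have hpos : 0 < 2 * D * T * A^2 := by positivity
    have := (lt_div_iff₀ hpos).1 h1
    linarith
  constructor
  · rintro ⟨u, u', hsol, hupos, h0, hTend⟩
    have hkey := aux_key T hT g g' hgpos hgd D hD hbd a ha ν hν u u' hsol hupos
      0 ⟨le_rfl, hTle⟩ h0 (by rw [h0, hTend]) hsmall
    rw [← hiadef, ← hAdef] at hkey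
    linarith
  · rintro ⟨u, u', hsol, hupos, hper, hper'⟩
    obtain ⟨hderiv, hcont, hinteq⟩ := hsol
    -- ∫ u' = u T - u 0 = 0
    have hint0 : (∫ t in (0:ℝ)..T, u' t) = 0 := by
      have hucont : ContinuousOn u (Icc 0 T) := fun x hx => (hderiv x hx).continuousWithinAt
      have hftc : (∫ t in (0:ℝ)..T, u' t) = u T - u 0 := by
        apply intervalIntegral.integral_eq_sub_of_hasDeriv_right_of_le hTle hucont
        · intro x hx
          exact (hderiv x (Ioo_subset_Icc_self hx)).mono_of_mem_nhdsWithin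
            (mem_nhdsWithin_of_mem_nhds (Icc_mem_nhds hx.1 hx.2))
        · apply ContinuousOn.intervalIntegrable
          rwa [uIcc_of_le hTle]
      rw [hftc, ← hper, sub_self]
    obtain ⟨ξ, hξ, hξ0⟩ := aux_exists_zero hT hcont hint0
    have hkey := aux_key T hT g g' hgpos hgd D hD hbd a ha ν hν u u'
      ⟨hderiv, hcont, hinteq⟩ hupos ξ hξ hξ0 hper'.symm hsmall
    rw [← hiadef, ← hAdef] at hkey
    linarith
end

section
/- Let T > 0 and let h : [0,T] × ℝ → ℝ be an L¹-Carathéodory function such that h(x,s) > 0 for a.e. x ∈ [0,T] and every s < 0. Then every solution u of u'' + h(x,u) = 0 on [0,T] satisfying either the Neumann boundary conditions or the periodic boundary conditions is non-negative on [0,T], i.e., u(x) ≥ 0 for every x ∈ [0,T]. -/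
open MeasureTheory Set Filter

/-- `h : [0,T] × ℝ → ℝ` is an `L¹`-Carathéodory function. -/
def L1Caratheodory (T : ℝ) (h : ℝ → ℝ → ℝ) : Prop :=
  (∀ s : ℝ, Measurable fun x => h x s) ∧
  (∀ᵐ x ∂(volume.restrict (Icc (0:ℝ) T)), Continuous fun s => h x s) ∧
  ∀ ρ : ℝ, 0 < ρ → ∃ γ : ℝ → ℝ, (∀ x, 0 ≤ γ x) ∧
    IntegrableOn γ (Icc (0:ℝ) T) volume ∧
    ∀ᵐ x ∂(volume.restrict (Icc (0:ℝ) T)), ∀ s : ℝ, |s| ≤ ρ → |h x s| ≤ γ x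

/-! Let `z` be a minimum point of `u` and suppose `u z < 0`. Near `z` we have `u < 0`, hence
`u'' = -h(x,u) < 0` a.e., so `u'` is strictly decreasing there. The boundary conditions provide a
minimum point `z` with `u' z ≤ 0` and room to its right, or with `u' z ≥ 0` and room to its left
(Fermat's rule at interior points); then `u` strictly decreases away from `z` on that side,
contradicting minimality. -/

open Topology

theorem intervalIntegral_pos_of_ae_pos {μ : Measure ℝ} [μ.IsOpenPosMeasure] {f : ℝ → ℝ}
    {a b : ℝ} (hab : a < b) (hfi : IntervalIntegrable f μ a b)
    (hf : ∀ᵐ x ∂μ.restrict (Ioc a b), 0 < f x) : 0 < ∫ x in a..b, f x ∂μ := by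
  rw [intervalIntegral.integral_pos_iff_support_of_nonneg_ae'
    (by rw [uIoc_of_le hab.le]; exact hf.mono fun x hx => hx.le) hfi]
  refine ⟨hab, ((Measure.measure_Ioo_pos μ).2 hab).trans_le
    ((measure_mono Ioo_subset_Ioc_self).trans (measure_mono_ae ?_))⟩
  filter_upwards [(ae_restrict_iff' measurableSet_Ioc).1 hf] with x hx hmem
  exact ⟨(hx hmem).ne', hmem⟩

namespace L1Caratheodory

variable {T : ℝ} {h : ℝ → ℝ → ℝ} {u : ℝ → ℝ}

theorem aemeasurable_comp (hh : L1Caratheodory T h) (hu : ContinuousOn u (Icc 0 T)) :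
    AEMeasurable (fun x => h x (u x)) (volume.restrict (Icc 0 T)) := by
  obtain ⟨S, hS_ae, hS, hS_cont⟩ := hh.2.1.exists_measurable_mem
  -- `h` modified off the full-measure set `S` so that it is continuous in `s` for every `x`
  set g : ℝ → ℝ → ℝ := fun s => S.indicator fun x => h x s
  have hg : Measurable (Function.uncurry g) :=
    (stronglyMeasurable_uncurry_of_continuous_of_stronglyMeasurable
      (fun x => by by_cases hx : x ∈ S <;> simp [hx, hS_cont x, continuous_const])
      fun s => ((hh.1 s).indicator hS).stronglyMeasurable).measurable
  refine (hg.comp_aemeasurable ((hu.aemeasurable measurableSet_Icc).prodMk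
    aemeasurable_id)).congr ?_
  filter_upwards [hS_ae] with x hx
  simp [g, hx]

theorem integrableOn_comp (hh : L1Caratheodory T h) (hu : ContinuousOn u (Icc 0 T)) :
    IntegrableOn (fun x => h x (u x)) (Icc 0 T) := by
  obtain ⟨C, hC⟩ := isCompact_Icc.exists_bound_of_continuousOn hu
  obtain ⟨γ, -, hγ, hγ_bound⟩ := hh.2.2 (|C| + 1) (by positivity)
  refine hγ.mono' (hh.aemeasurable_comp hu).aestronglyMeasurable ?_
  filter_upwards [hγ_bound, ae_restrict_mem measurableSet_Icc] with x hx hmem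
  exact hx (u x) (((hC x hmem).trans (le_abs_self C)).trans (by linarith))

end L1Caratheodory

namespace IsSolOn

variable {T : ℝ} {f u u' : ℝ → ℝ}

theorem continuousOn_s17 (hs : IsSolOn T f u u') : ContinuousOn u (Icc 0 T) :=
  fun x hx => (hs.1 x hx).continuousWithinAt

theorem deriv_sub_deriv (hs : IsSolOn T f u u') (hf : IntegrableOn f (Icc 0 T)) {a c : ℝ}
    (ha : a ∈ Icc 0 T) (hc : c ∈ Icc 0 T) : u' a - u' c = ∫ t in a..c, f t := by
  have hfi : ∀ x ∈ Icc 0 T, IntervalIntegrable f volume 0 x := fun x hx =>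
    (hf.mono_set (uIcc_subset_Icc ⟨le_rfl, hx.1.trans hx.2⟩ hx)).intervalIntegrable
  rw [hs.2.2 a ha, hs.2.2 c hc, ← intervalIntegral.integral_interval_sub_left (hfi c hc) (hfi a ha)]
  ring

theorem hasDerivWithinAt_interior (hs : IsSolOn T f u u') {a c : ℝ} (ha : 0 ≤ a) (hc : c ≤ T) :
    ∀ x ∈ interior (Icc a c), HasDerivWithinAt u (u' x) (interior (Icc a c)) x := fun x hx =>
  (hs.1 x (Icc_subset_Icc ha hc (interior_subset hx))).mono
    (interior_subset.trans (Icc_subset_Icc ha hc))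

theorem strictAntiOn_deriv (hs : IsSolOn T f u u') (hf : IntegrableOn f (Icc 0 T))
    (hf_pos : ∀ᵐ x ∂(volume.restrict (Icc 0 T)), u x < 0 → 0 < f x) {a c : ℝ} (ha : 0 ≤ a)
    (hc : c ≤ T) (hneg : ∀ x ∈ Icc a c, u x < 0) : StrictAntiOn u' (Icc a c) := by
  intro x hx y hy hxy
  have hsub : Icc a c ⊆ Icc 0 T := Icc_subset_Icc ha hc
  rw [← sub_pos, hs.deriv_sub_deriv hf (hsub hx) (hsub hy)]
  refine intervalIntegral_pos_of_ae_pos hxy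
    (hf.mono_set ((uIcc_subset_Icc hx hy).trans hsub)).intervalIntegrable ?_
  have hIoc : Ioc x y ⊆ Icc a c := Ioc_subset_Icc_self.trans (Icc_subset_Icc hx.1 hy.2)
  filter_upwards [ae_restrict_of_ae_restrict_of_subset (hIoc.trans hsub) hf_pos,
    ae_restrict_mem measurableSet_Ioc] with t ht hmem
  exact ht (hneg t (hIoc hmem))

theorem not_isMinOn_of_deriv_nonpos (hs : IsSolOn T f u u') (hf : IntegrableOn f (Icc 0 T))
    (hf_pos : ∀ᵐ x ∂(volume.restrict (Icc 0 T)), u x < 0 → 0 < f x) {z : ℝ} (hz : 0 ≤ z)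
    (hzT : z < T) (huz : u z < 0) (hu'z : u' z ≤ 0) : ¬ IsMinOn u (Icc 0 T) z := by
  have hev : ∀ᶠ x in 𝓝[≥] z, u x < 0 ∧ x ≤ T := by
    rw [← nhdsWithin_Icc_eq_nhdsGE hzT]
    exact (((hs.continuousOn_s17 z ⟨hz, hzT.le⟩).mono (Icc_subset_Icc_left hz)).eventually
      (gt_mem_nhds huz)).and (eventually_mem_nhdsWithin.mono fun x hx => hx.2)
  obtain ⟨c, hzc, hsub⟩ := mem_nhdsGE_iff_exists_Icc_subset.1 hev
  have hcT : c ≤ T := (hsub ⟨hzc.le, le_rfl⟩).2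
  have hanti : StrictAntiOn u (Icc z c) := by
    refine strictAntiOn_of_hasDerivWithinAt_neg (convex_Icc z c)
      (hs.continuousOn_s17.mono (Icc_subset_Icc hz hcT)) (hs.hasDerivWithinAt_interior hz hcT)
      fun x hx => ?_
    rw [interior_Icc] at hx
    exact (hs.strictAntiOn_deriv hf hf_pos hz hcT (fun y hy => (hsub hy).1)
      (left_mem_Icc.2 hzc.le) (Ioo_subset_Icc_self hx) hx.1).trans_le hu'z
  intro hmin
  exact (hanti (left_mem_Icc.2 hzc.le) (right_mem_Icc.2 hzc.le) hzc).not_ge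
    (isMinOn_iff.1 hmin c ⟨hz.trans hzc.le, hcT⟩)

theorem not_isMinOn_of_deriv_nonneg (hs : IsSolOn T f u u') (hf : IntegrableOn f (Icc 0 T))
    (hf_pos : ∀ᵐ x ∂(volume.restrict (Icc 0 T)), u x < 0 → 0 < f x) {z : ℝ} (hz : 0 < z)
    (hzT : z ≤ T) (huz : u z < 0) (hu'z : 0 ≤ u' z) : ¬ IsMinOn u (Icc 0 T) z := by
  have hev : ∀ᶠ x in 𝓝[≤] z, u x < 0 ∧ 0 ≤ x := by
    rw [← nhdsWithin_Icc_eq_nhdsLE hz]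
    exact (((hs.continuousOn_s17 z ⟨hz.le, hzT⟩).mono (Icc_subset_Icc_right hzT)).eventually
      (gt_mem_nhds huz)).and (eventually_mem_nhdsWithin.mono fun x hx => hx.1)
  obtain ⟨a, haz, hsub⟩ := mem_nhdsLE_iff_exists_Icc_subset.1 hev
  have ha : 0 ≤ a := (hsub ⟨le_rfl, haz.le⟩).2
  have hmono : StrictMonoOn u (Icc a z) := by
    refine strictMonoOn_of_hasDerivWithinAt_pos (convex_Icc a z)
      (hs.continuousOn_s17.mono (Icc_subset_Icc ha hzT)) (hs.hasDerivWithinAt_interior ha hzT)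
      fun x hx => ?_
    rw [interior_Icc] at hx
    exact hu'z.trans_lt (hs.strictAntiOn_deriv hf hf_pos ha hzT (fun y hy => (hsub hy).1)
      (Ioo_subset_Icc_self hx) (right_mem_Icc.2 haz.le) hx.2)
  intro hmin
  exact (hmono (left_mem_Icc.2 haz.le) (right_mem_Icc.2 haz.le) haz).not_ge
    (isMinOn_iff.1 hmin a ⟨ha, haz.le.trans hzT⟩)

/-- A minimum at `0` is also one at `T`, and `u' 0 = u' T` has a sign that lets `u` descend either
to the right of `0` or to the left of `T`. -/
theorem not_isMinOn_zero_of_periodic (hs : IsSolOn T f u u') (hf : IntegrableOn f (Icc 0 T))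
    (hf_pos : ∀ᵐ x ∂(volume.restrict (Icc 0 T)), u x < 0 → 0 < f x) (hT : 0 < T)
    (hu : u 0 = u T) (hu' : u' 0 = u' T) (hu0 : u 0 < 0) : ¬ IsMinOn u (Icc 0 T) 0 := by
  intro hmin
  rcases le_or_gt (u' 0) 0 with h0 | h0
  · exact hs.not_isMinOn_of_deriv_nonpos hf hf_pos le_rfl hT hu0 h0 hmin
  · exact hs.not_isMinOn_of_deriv_nonneg hf hf_pos hT le_rfl (hu ▸ hu0) (hu' ▸ h0.le)
      (isMinOn_iff.2 fun y hy => hu ▸ isMinOn_iff.1 hmin y hy)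

theorem nonneg_of_neumann_or_periodic (hs : IsSolOn T f u u') (hf : IntegrableOn f (Icc 0 T))
    (hf_pos : ∀ᵐ x ∂(volume.restrict (Icc 0 T)), u x < 0 → 0 < f x) (hT : 0 < T)
    (hBC : (u' 0 = 0 ∧ u' T = 0) ∨ (u 0 = u T ∧ u' 0 = u' T)) :
    ∀ x ∈ Icc (0:ℝ) T, 0 ≤ u x := by
  by_contra! ⟨x, hx, hux⟩
  obtain ⟨z, hz, hmin⟩ := isCompact_Icc.exists_isMinOn ⟨x, hx⟩ hs.continuousOn_s17
  have huz : u z < 0 := (isMinOn_iff.1 hmin x hx).trans_lt hux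
  rcases hz.1.eq_or_lt with rfl | h0z
  · rcases hBC with ⟨hN0, -⟩ | ⟨hu, hu'⟩
    · exact hs.not_isMinOn_of_deriv_nonpos hf hf_pos le_rfl hT huz hN0.le hmin
    · exact hs.not_isMinOn_zero_of_periodic hf hf_pos hT hu hu' huz hmin
  rcases hz.2.eq_or_lt with rfl | hzT
  · rcases hBC with ⟨-, hNT⟩ | ⟨hu, hu'⟩
    · exact hs.not_isMinOn_of_deriv_nonneg hf hf_pos h0z le_rfl huz hNT.ge hmin
    · exact hs.not_isMinOn_zero_of_periodic hf hf_pos h0z hu hu' (hu ▸ huz)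
        (isMinOn_iff.2 fun y hy => hu ▸ isMinOn_iff.1 hmin y hy)
  have hderiv : HasDerivAt u (u' z) z := (hs.1 z hz).hasDerivAt (Icc_mem_nhds h0z hzT)
  exact hs.not_isMinOn_of_deriv_nonpos hf hf_pos hz.1 hzT huz
    ((hmin.isLocalMin (Icc_mem_nhds h0z hzT)).hasDerivAt_eq_zero hderiv).le hmin

end IsSolOn

/-- Maximum principle (i): if `h` is `L¹`-Carathéodory with `h(x,s) > 0` for
a.e. `x` and every `s < 0`, then every Neumann or periodic solution of
`u'' + h(x,u) = 0` is non-negative on `[0,T]`. -/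
theorem statement_17
    (T : ℝ) (hT : 0 < T)
    (h : ℝ → ℝ → ℝ) (hCar : L1Caratheodory T h)
    (hpos : ∀ᵐ x ∂(volume.restrict (Icc (0:ℝ) T)), ∀ s : ℝ, s < 0 → 0 < h x s)
    (u u' : ℝ → ℝ)
    (hsol : IsSolOn T (fun t => h t (u t)) u u')
    (hBC : (u' 0 = 0 ∧ u' T = 0) ∨ (u 0 = u T ∧ u' 0 = u' T)) :
    ∀ x ∈ Icc (0:ℝ) T, 0 ≤ u x :=
  hsol.nonneg_of_neumann_or_periodic
    (hCar.integrableOn_comp hsol.continuousOn_s17) (hpos.mono fun x hx => hx (u x)) hT hBC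
end

section
/- Let T > 0 and let h : [0,T] × ℝ → ℝ be an L¹-Carathéodory function with h(x,0) = 0 for a.e. x ∈ [0,T]. Assume there exists a non-negative q ∈ L¹([0,T]) such that limsup_{s→0⁺} |h(x,s)|/s ≤ q(x) uniformly for a.e. x ∈ [0,T], meaning: for every ε > 0 there exists δ > 0 such that |h(x,s)| ≤ (q(x) + ε) s for a.e. x ∈ [0,T] and every s with 0 < s ≤ δ. Then every solution u of u'' + h(x,u) = 0 on [0,T] satisfying either the Neumann boundary conditions or the periodic boundary conditions, with u(x) ≥ 0 for all x ∈ [0,T] and u not identically zero, satisfies u(x) > 0 for every x ∈ [0,T]. -/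
open MeasureTheory Set Filter

/-!
At a zero `c` of a non-negative solution, `u'(c) = 0`: at an interior point because `c` is a
minimum, at an end point by the Neumann conditions, or, in the periodic case, because `u` vanishes
at both ends, so that `u'(0) ≥ 0 ≥ u'(T) = u'(0)`. Near `c` the solution is small, so
`|h(x,u)| ≤ M(x) u` with `M = q + 1 ∈ L¹`. On `J = [0,T] ∩ [c - η, c + η]` this gives
`|u'| ≤ (∫_J M) · max_J u`, whence `max_J u ≤ η (∫_J M) max_J u`, so `u = 0` on `J` once
`η ∫ M < 1`.
So the zero set of `u` is open in `[0,T]`; being closed, it is empty or all of `[0,T]`.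
-/

open Topology
open scoped Interval

theorem aestronglyMeasurable_comp_of_caratheodory {α : Type*} [MeasurableSpace α]
    {μ : Measure α} {h : α → ℝ → ℝ} (hmeas : ∀ s, Measurable fun x => h x s)
    (hcont : ∀ᵐ x ∂μ, Continuous (h x)) {v : α → ℝ} (hv : AEMeasurable v μ) :
    AEStronglyMeasurable (fun x => h x (v x)) μ := by
  set N := toMeasurable μ {x | ¬Continuous (h x)}
  have hN : μ N = 0 := by rw [measure_toMeasurable]; exact ae_iff.1 hcont
  -- Killing `h` on the null set `N` makes it continuous in `s` everywhere.
  set h' : α → ℝ → ℝ := fun x s => Nᶜ.indicator (fun y => h y s) x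
  have h'cont : ∀ x, Continuous (h' x) := by
    intro x
    by_cases hx : x ∈ N
    · simpa [h', hx] using continuous_const
    · have : Continuous (h x) := by
        by_contra hc
        exact hx (subset_toMeasurable _ _ hc)
      simpa [h', hx] using this
  have h'meas : StronglyMeasurable (Function.uncurry fun s x => h' x s) :=
    stronglyMeasurable_uncurry_of_continuous_of_stronglyMeasurable h'cont fun s =>
      ((hmeas s).indicator (measurableSet_toMeasurable _ _).compl).stronglyMeasurable
  refine ⟨fun x => h' x (hv.mk v x),
    h'meas.comp_measurable (hv.measurable_mk.prodMk measurable_id), ?_⟩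
  filter_upwards [hv.ae_eq_mk, measure_eq_zero_iff_ae_notMem.1 hN] with x hx hxN
  simp [h', hxN, hx]

theorem L1Caratheodory.integrableOn_comp_s18 {T : ℝ} {h : ℝ → ℝ → ℝ}
    (hh : L1Caratheodory T h) {u : ℝ → ℝ} (hu : ContinuousOn u (Icc 0 T)) :
    IntegrableOn (fun x => h x (u x)) (Icc 0 T) := by
  obtain ⟨C, hC⟩ := isCompact_Icc.exists_bound_of_continuousOn hu
  obtain ⟨γ, -, hγ, hγbound⟩ := hh.2.2 (max C 1) (by positivity)
  refine hγ.mono' (aestronglyMeasurable_comp_of_caratheodory hh.1 hh.2.1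
    (hu.aemeasurable measurableSet_Icc)) ?_
  filter_upwards [hγbound, ae_restrict_mem measurableSet_Icc] with x hx hxI
  exact hx _ ((hC x hxI).trans (le_max_left _ _))

theorem IsSolOn.deriv_eq_sub_integral {T : ℝ} {f u u' : ℝ → ℝ} (hsol : IsSolOn T f u u')
    (hf : IntegrableOn f (Icc 0 T)) {c x : ℝ} (hc : c ∈ Icc 0 T) (hx : x ∈ Icc 0 T) :
    u' x = u' c - ∫ t in c..x, f t := by
  have h0 : (0:ℝ) ∈ Icc 0 T := ⟨le_rfl, hc.1.trans hc.2⟩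
  rw [hsol.2.2 x hx, hsol.2.2 c hc, ← intervalIntegral.integral_interval_sub_left
    (hf.mono_set (uIcc_subset_Icc h0 hx)).intervalIntegrable
    (hf.mono_set (uIcc_subset_Icc h0 hc)).intervalIntegrable]
  ring

theorem IsMinOn.hasDerivWithinAt_Icc_left_nonneg {u : ℝ → ℝ} {a b d : ℝ} (hab : a < b)
    (hmin : IsMinOn u (Icc a b) a) (hd : HasDerivWithinAt u d (Icc a b) a) : 0 ≤ d := by
  have hcone : b - a ∈ posTangentConeAt (Icc a b) a :=
    sub_mem_posTangentConeAt_of_segment_subset (segment_eq_Icc hab.le ▸ Subset.rfl)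
  have := hmin.localize.hasFDerivWithinAt_nonneg hd hcone
  simp only [ContinuousLinearMap.toSpanSingleton_apply, smul_eq_mul] at this
  exact nonneg_of_mul_nonneg_right this (sub_pos.2 hab)

theorem IsMinOn.hasDerivWithinAt_Icc_right_nonpos {u : ℝ → ℝ} {a b d : ℝ} (hab : a < b)
    (hmin : IsMinOn u (Icc a b) b) (hd : HasDerivWithinAt u d (Icc a b) b) : d ≤ 0 := by
  have hcone : a - b ∈ posTangentConeAt (Icc a b) b :=
    sub_mem_posTangentConeAt_of_segment_subset (by rw [segment_symm, segment_eq_Icc hab.le])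
  have := hmin.localize.hasFDerivWithinAt_nonneg hd hcone
  simp only [ContinuousLinearMap.toSpanSingleton_apply, smul_eq_mul] at this
  exact nonpos_of_mul_nonneg_right this (sub_neg.2 hab)

theorem eqOn_zero_of_short_interval {J : Set ℝ} (hJc : IsCompact J) (hJ : J.OrdConnected)
    {u u' f M : ℝ → ℝ} {c η : ℝ} (hc : c ∈ J)
    (hu : ∀ x ∈ J, HasDerivWithinAt u (u' x) J x)
    (hu' : ∀ x ∈ J, u' x = -∫ t in c..x, f t)
    (hf : ∀ᵐ t ∂volume.restrict J, |f t| ≤ M t * u t)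
    (hM0 : ∀ t ∈ J, 0 ≤ M t) (hM : IntegrableOn M J)
    (hnn : ∀ x ∈ J, 0 ≤ u x) (huc : u c = 0)
    (hη : ∀ x ∈ J, |x - c| ≤ η) (hsmall : η * ∫ t in J, M t < 1) :
    EqOn u 0 J := by
  have hJm : MeasurableSet J := hJc.isClosed.measurableSet
  obtain ⟨ξ, hξ, hmax⟩ :=
    hJc.exists_isMaxOn ⟨c, hc⟩ fun x hx => (hu x hx).continuousWithinAt
  set A := ∫ t in J, M t
  have hA : 0 ≤ A := setIntegral_nonneg hJm hM0
  have hderiv : ∀ x ∈ J, ‖u' x‖ ≤ A * u ξ := by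
    intro x hx
    have hsub : Ι c x ⊆ J := uIoc_subset_uIcc.trans (hJ.uIcc_subset hc hx)
    rw [hu' x hx, norm_neg, intervalIntegral.norm_integral_eq_norm_integral_uIoc]
    calc ‖∫ t in Ι c x, f t‖ ≤ ∫ t in Ι c x, M t * u ξ := by
          refine norm_integral_le_of_norm_le ((hM.mono_set hsub).mul_const _) ?_
          filter_upwards [ae_restrict_of_ae_restrict_of_subset hsub hf,
            ae_restrict_mem measurableSet_uIoc] with t ht htI
          exact ht.trans (mul_le_mul_of_nonneg_left (hmax (hsub htI)) (hM0 t (hsub htI)))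
      _ ≤ ∫ t in J, M t * u ξ := by
          refine setIntegral_mono_set (hM.mul_const _) ?_ hsub.eventuallyLE
          filter_upwards [ae_restrict_mem hJm] with t ht
          exact mul_nonneg (hM0 t ht) (hnn ξ hξ)
      _ = A * u ξ := integral_mul_const _ _
  have hval : ∀ x ∈ J, u x ≤ η * (A * u ξ) := by
    intro x hx
    have hmvt := hJ.convex.norm_image_sub_le_of_norm_hasDerivWithin_le hu hderiv hc hx
    rw [huc, sub_zero, Real.norm_eq_abs, Real.norm_eq_abs] at hmvt
    calc u x ≤ A * u ξ * |x - c| := (le_abs_self _).trans hmvt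
      _ ≤ A * u ξ * η := by gcongr; exacts [mul_nonneg hA (hnn ξ hξ), hη x hx]
      _ = η * (A * u ξ) := by ring
  have hξ0 : u ξ = 0 := by nlinarith [hval ξ hξ, hnn ξ hξ]
  exact fun x hx => le_antisymm (by simpa [hξ0] using hmax hx) (hnn x hx)

theorem eventually_eq_zero_of_abs_le_mul_self {I : Set ℝ} (hIc : IsCompact I)
    (hI : I.OrdConnected) {u u' f M : ℝ → ℝ} {c δ : ℝ} (hδ : 0 < δ) (hc : c ∈ I)
    (hu : ∀ x ∈ I, HasDerivWithinAt u (u' x) I x)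
    (hu' : ∀ x ∈ I, u' x = -∫ t in c..x, f t)
    (hf : ∀ᵐ t ∂volume.restrict I, u t ≤ δ → |f t| ≤ M t * u t)
    (hM0 : ∀ t ∈ I, 0 ≤ M t) (hM : IntegrableOn M I)
    (hnn : ∀ x ∈ I, 0 ≤ u x) (huc : u c = 0) :
    ∀ᶠ x in 𝓝[I] c, u x = 0 := by
  obtain ⟨ε, hε, hsmall⟩ :=
    Metric.continuousWithinAt_iff.1 (hu c hc).continuousWithinAt δ hδ
  set A := ∫ t in I, M t
  obtain ⟨η, ⟨hηε, hηA⟩, hη⟩ : ∃ η, (η < ε ∧ η * A < 1) ∧ 0 < η := by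
    have hev : ∀ᶠ η in 𝓝 (0:ℝ), η < ε ∧ η * A < 1 :=
      (gt_mem_nhds hε).and <| ((continuous_mul_const A).tendsto' 0 0 (zero_mul A)).eventually
        (gt_mem_nhds one_pos)
    exact ((hev.filter_mono nhdsWithin_le_nhds).and self_mem_nhdsWithin).exists (f := 𝓝[>] 0)
  set J := I ∩ Icc (c - η) (c + η)
  have hJI : J ⊆ I := inter_subset_left
  have hJm : MeasurableSet J := hIc.isClosed.measurableSet.inter measurableSet_Icc
  have hJη : ∀ x ∈ J, |x - c| ≤ η := fun x hx =>
    abs_sub_le_iff.2 ⟨by linarith [hx.2.2], by linarith [hx.2.1]⟩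
  have hJδ : ∀ x ∈ J, u x ≤ δ := by
    intro x hx
    have := hsmall hx.1 (by rw [Real.dist_eq]; exact (hJη x hx).trans_lt hηε)
    rw [huc, Real.dist_eq, sub_zero] at this
    exact (le_abs_self _).trans this.le
  have hJA : η * ∫ t in J, M t < 1 := by
    refine lt_of_le_of_lt (mul_le_mul_of_nonneg_left ?_ hη.le) hηA
    refine setIntegral_mono_set hM ?_ hJI.eventuallyLE
    filter_upwards [ae_restrict_mem hIc.isClosed.measurableSet] with t ht using hM0 t ht
  have hJzero : EqOn u 0 J := by
    refine eqOn_zero_of_short_interval (hIc.inter_right isClosed_Icc) (hI.inter ordConnected_Icc)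
      ⟨hc, by constructor <;> linarith⟩ (fun x hx => (hu x hx.1).mono hJI)
      (fun x hx => hu' x hx.1) ?_ (fun t ht => hM0 t ht.1) (hM.mono_set hJI)
      (fun x hx => hnn x hx.1) huc hJη hJA
    filter_upwards [ae_restrict_of_ae_restrict_of_subset hJI hf, ae_restrict_mem hJm] with t ht htJ
      using ht (hJδ t htJ)
  filter_upwards [inter_mem_nhdsWithin I
    (Icc_mem_nhds (sub_lt_self c hη) (lt_add_of_pos_right c hη))] with x hx using hJzero hx

theorem deriv_eq_zero_of_eq_zero_of_nonneg {T : ℝ} (hT : 0 < T) {u u' : ℝ → ℝ}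
    (hu : ∀ x ∈ Icc 0 T, HasDerivWithinAt u (u' x) (Icc 0 T) x)
    (hBC : (u' 0 = 0 ∧ u' T = 0) ∨ (u 0 = u T ∧ u' 0 = u' T))
    (hnn : ∀ x ∈ Icc 0 T, 0 ≤ u x) {c : ℝ} (hc : c ∈ Icc 0 T) (huc : u c = 0) :
    u' c = 0 := by
  have hmin : ∀ {x}, u x = 0 → IsMinOn u (Icc 0 T) x := fun hx y hy => hx ▸ hnn y hy
  have h0 : (0:ℝ) ∈ Icc 0 T := left_mem_Icc.2 hT.le
  have hT' : T ∈ Icc 0 T := right_mem_Icc.2 hT.le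
  have hperiodic (hP : u 0 = u T) (hP' : u' 0 = u' T) (hzero : u 0 = 0) : u' 0 = 0 :=
    le_antisymm (hP' ▸ (hmin (hP ▸ hzero)).hasDerivWithinAt_Icc_right_nonpos hT (hu T hT'))
      ((hmin hzero).hasDerivWithinAt_Icc_left_nonneg hT (hu 0 h0))
  rcases hc.1.eq_or_lt with rfl | hc0
  · rcases hBC with ⟨hN, -⟩ | ⟨hP, hP'⟩
    exacts [hN, hperiodic hP hP' huc]
  rcases hc.2.eq_or_lt with rfl | hcT
  · rcases hBC with ⟨-, hN⟩ | ⟨hP, hP'⟩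
    exacts [hN, hP' ▸ hperiodic hP hP' (hP.trans huc)]
  have hI : Icc 0 T ∈ 𝓝 c := Icc_mem_nhds hc0 hcT
  exact ((hmin huc).isLocalMin hI).hasDerivAt_eq_zero ((hu c hc).hasDerivAt hI)

/-- Maximum principle (ii): if `h` is `L¹`-Carathéodory with `h(x,0) = 0` a.e.
and `limsup_{s→0⁺} |h(x,s)|/s ≤ q(x)` uniformly a.e. for some non-negative
`q ∈ L¹([0,T])`, then every non-negative, not identically zero, Neumann or
periodic solution of `u'' + h(x,u) = 0` is strictly positive on `[0,T]`. -/
theorem statement_18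
    (T : ℝ) (hT : 0 < T)
    (h : ℝ → ℝ → ℝ) (hCar : L1Caratheodory T h)
    (h0 : ∀ᵐ x ∂(volume.restrict (Icc (0:ℝ) T)), h x 0 = 0)
    (q : ℝ → ℝ) (hq0 : ∀ x, 0 ≤ q x)
    (hqint : IntegrableOn q (Icc (0:ℝ) T) volume)
    (hlim : ∀ ε : ℝ, 0 < ε → ∃ δ > (0:ℝ),
      ∀ᵐ x ∂(volume.restrict (Icc (0:ℝ) T)), ∀ s : ℝ, 0 < s → s ≤ δ →
        |h x s| ≤ (q x + ε) * s)
    (u u' : ℝ → ℝ)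
    (hsol : IsSolOn T (fun t => h t (u t)) u u')
    (hBC : (u' 0 = 0 ∧ u' T = 0) ∨ (u 0 = u T ∧ u' 0 = u' T))
    (hnn : ∀ x ∈ Icc (0:ℝ) T, 0 ≤ u x)
    (hne : ¬ (∀ x ∈ Icc (0:ℝ) T, u x = 0)) :
    ∀ x ∈ Icc (0:ℝ) T, 0 < u x := by
  have hu : ContinuousOn u (Icc 0 T) := fun x hx => (hsol.1 x hx).continuousWithinAt
  have hf := hCar.integrableOn_comp_s18 hu
  obtain ⟨δ, hδ, hδbound⟩ := hlim 1 one_pos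
  have hbound : ∀ᵐ t ∂volume.restrict (Icc 0 T),
      u t ≤ δ → |h t (u t)| ≤ (q t + 1) * u t := by
    filter_upwards [h0, hδbound, ae_restrict_mem measurableSet_Icc] with t ht0 htδ ht hut
    rcases (hnn t ht).eq_or_lt with hzero | hpos
    · simp [← hzero, ht0]
    · exact htδ _ hpos hut
  have hloc : ∀ c ∈ Icc 0 T, u c = 0 → ∀ᶠ x in 𝓝[Icc 0 T] c, u x = 0 := by
    intro c hc huc
    refine eventually_eq_zero_of_abs_le_mul_self isCompact_Icc ordConnected_Icc hδ hc hsol.1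
      (fun x hx => ?_) hbound (fun t _ => by linarith [hq0 t])
      (hqint.add (integrableOn_const measure_Icc_lt_top.ne)) hnn huc
    rw [hsol.deriv_eq_sub_integral hf hc hx,
      deriv_eq_zero_of_eq_zero_of_nonneg hT hsol.1 hBC hnn hc huc, zero_sub]
  -- `u x = 0` is a locally constant condition on the connected set `[0,T]`.
  have hzero_spreads : ∀ x ∈ Icc 0 T, ∀ y ∈ Icc 0 T, u x = 0 → u y = 0 := by
    refine fun x hx y hy => isPreconnected_Icc.induction₂' (fun a b => u a = 0 → u b = 0)
      (fun a ha => ?_) (fun _ _ _ _ _ _ hab hbc => hbc ∘ hab) hx hy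
    by_cases hua : u a = 0
    · filter_upwards [hloc a ha hua] with b hub using ⟨fun _ => hub, fun _ => hua⟩
    · filter_upwards [(hu a ha).eventually_ne hua] with b hub
      exact ⟨fun hua' => absurd hua' hua, fun hub' => absurd hub' hub⟩
  intro x hx
  exact (hnn x hx).lt_of_ne fun hux => hne fun y hy => hzero_spreads x hx y hy hux.symm
end
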